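/- For every assemblage {ρ̂^{a,x}}, the intrinsic steerability is never smaller than the restricted intrinsic steerability: S(Ā;B)_ρ̂ ≥ S^R(Ā;B)_ρ̂. -/

import Mathlib

open scoped BigOperators
open Matrix Kronecker
open scoped ComplexOrder

noncomputable section

/-- `φ(t) = -t·log₂ t`. -/
noncomputable def entPhi (t : ℝ) : ℝ := -(t * Real.logb 2 t)

/-- von Neumann entropy (in bits) of a Hermitian matrix, via its eigenvalues. -/
noncomputable def vnEntropy {n : Type*} [Fintype n] [DecidableEq n] (ρ : Matrix n n ℂ) : ℝ :=
  if h : ρ.IsHermitian then ∑ i, entPhi (h.eigenvalues i) else 0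

/-- Partial trace over the second factor. -/
def ptrace2 {I J : Type*} [Fintype J] (ρ : Matrix (I × J) (I × J) ℂ) : Matrix I I ℂ :=
  Matrix.of fun i i' => ∑ j, ρ (i, j) (i', j)

/-- Partial trace over the first factor. -/
def ptrace1 {I J : Type*} [Fintype I] (ρ : Matrix (I × J) (I × J) ℂ) : Matrix J J ℂ :=
  Matrix.of fun j j' => ∑ i, ρ (i, j) (i, j')

/-- Marginal on `K × M` of a state on `K × L × M`. -/
def margKM {K L M : Type*} [Fintype L] (σ : Matrix (K × L × M) (K × L × M) ℂ) :
    Matrix (K × M) (K × M) ℂ :=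
  Matrix.of fun p q => ∑ l, σ (p.1, l, p.2) (q.1, l, q.2)

/-- Marginal on `L × M` of a state on `K × L × M`. -/
def margLM {K L M : Type*} [Fintype K] (σ : Matrix (K × L × M) (K × L × M) ℂ) :
    Matrix (L × M) (L × M) ℂ :=
  Matrix.of fun p q => ∑ k, σ (k, p.1, p.2) (k, q.1, q.2)

/-- Marginal on `M` of a state on `K × L × M`. -/
def margM {K L M : Type*} [Fintype K] [Fintype L] (σ : Matrix (K × L × M) (K × L × M) ℂ) :
    Matrix M M ℂ :=
  Matrix.of fun m m' => ∑ k, ∑ l, σ (k, l, m) (k, l, m')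

/-- Conditional mutual information `I(K;L|M)` of a state on `K × L × M`. -/
noncomputable def CMI {K L M : Type*} [Fintype K] [Fintype L] [Fintype M]
    [DecidableEq K] [DecidableEq L] [DecidableEq M]
    (σ : Matrix (K × L × M) (K × L × M) ℂ) : ℝ :=
  vnEntropy (margKM σ) + vnEntropy (margLM σ) - vnEntropy σ - vnEntropy (margM σ)

def IsProbDist {X : Type*} [Fintype X] (p : X → ℝ) : Prop :=
  (∀ x, 0 ≤ p x) ∧ ∑ x, p x = 1

/-- An assemblage: PSD members, normalized for each input, and no-signaling. -/
def IsAssemblage {A X B : Type*} [Fintype A] [Fintype B]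
    (ρ : A → X → Matrix B B ℂ) : Prop :=
  (∀ a x, (ρ a x).PosSemidef) ∧
  (∀ x, ∑ a, (ρ a x).trace = 1) ∧
  (∀ x x' : X, ∑ a, ρ a x = ∑ a, ρ a x')

/-- A non-signaling extension of an assemblage on `ℂ^dE`. -/
def IsNSExt {A X B : Type*} [Fintype A] [Fintype B] {dE : ℕ}
    (ρ : A → X → Matrix B B ℂ)
    (ext : A → X → Matrix (B × Fin dE) (B × Fin dE) ℂ) : Prop :=
  (∀ a x, (ext a x).PosSemidef) ∧
  (∀ a x, ptrace2 (ext a x) = ρ a x) ∧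
  (∀ x x' : X, ∑ a, ext a x = ∑ a, ext a x')

/-- The classical-quantum state `∑_{x,a} p(x)·|x⟩⟨x| ⊗ |a⟩⟨a| ⊗ ext^{a,x}`. -/
def cqStateR {A X B : Type*} [DecidableEq A] [DecidableEq X] {dE : ℕ} (p : X → ℝ)
    (ext : A → X → Matrix (B × Fin dE) (B × Fin dE) ℂ) :
    Matrix ((X × A) × B × Fin dE) ((X × A) × B × Fin dE) ℂ :=
  Matrix.of fun q q' =>
    if q.1 = q'.1 then (p q.1.1 : ℂ) * ext q.1.2 q.1.1 q.2 q'.2 else 0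

/-- Restricted intrinsic steerability `S^R(Ā;B)`. -/
noncomputable def SR {A X B : Type*} [Fintype A] [Fintype X] [Fintype B]
    [DecidableEq A] [DecidableEq X] [DecidableEq B]
    (ρ : A → X → Matrix B B ℂ) : ℝ :=
  sSup { v : ℝ | ∃ p : X → ℝ, IsProbDist p ∧
    v = sInf { w : ℝ | ∃ dE : ℕ, 1 ≤ dE ∧
      ∃ ext : A → X → Matrix (B × Fin dE) (B × Fin dE) ℂ,
        IsNSExt ρ ext ∧ w = CMI (cqStateR p ext) } }

/-- Apply one branch (CP map with Kraus operators `V u`) of a quantum instrument. -/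
def instrApply {B : Type*} [Fintype B] {dB' nk : ℕ}
    (V : Fin nk → Matrix (Fin dB') B ℂ) (σ : Matrix B B ℂ) :
    Matrix (Fin dB') (Fin dB') ℂ :=
  ∑ u, V u * σ * (V u)ᴴ

/-- The classical-quantum state `∑_{x,a,y} p(x|y)·|x⟩⟨x| ⊗ |a⟩⟨a| ⊗ ext^{a,x,y} ⊗ |y⟩⟨y|`. -/
def cqStateS {A X : Type*} [DecidableEq A] [DecidableEq X] {dB' dE m : ℕ}
    (p : X → Fin m → ℝ)
    (ext : A → X → Fin m → Matrix (Fin dB' × Fin dE) (Fin dB' × Fin dE) ℂ) :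
    Matrix ((X × A) × Fin dB' × Fin dE × Fin m) ((X × A) × Fin dB' × Fin dE × Fin m) ℂ :=
  Matrix.of fun q q' =>
    if q.1 = q'.1 ∧ q.2.2.2 = q'.2.2.2 then
      (p q.1.1 q.2.2.2 : ℂ) * ext q.1.2 q.1.1 q.2.2.2 (q.2.1, q.2.2.1) (q'.2.1, q'.2.2.1)
    else 0

/-- Intrinsic steerability `S(Ā;B)`: sup over 1W-LOCC operations (instruments `V` together
with conditional distributions `pXY`), inf over non-signaling extensions, of `I(XĀ;B'|EY)`. -/
noncomputable def IS {A X B : Type*} [Fintype A] [Fintype X] [Fintype B]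
    [DecidableEq A] [DecidableEq X] [DecidableEq B]
    (ρ : A → X → Matrix B B ℂ) : ℝ :=
  sSup { v : ℝ | ∃ (m dB' nk : ℕ) (V : Fin m → Fin nk → Matrix (Fin dB') B ℂ)
      (pXY : X → Fin m → ℝ), 1 ≤ m ∧ 1 ≤ dB' ∧
      (∑ y, ∑ u, (V y u)ᴴ * V y u) = (1 : Matrix B B ℂ) ∧
      (∀ y, IsProbDist fun x => pXY x y) ∧
      v = sInf { w : ℝ | ∃ dE : ℕ, 1 ≤ dE ∧
        ∃ ext : A → X → Fin m → Matrix (Fin dB' × Fin dE) (Fin dB' × Fin dE) ℂ,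
          (∀ a x y, (ext a x y).PosSemidef) ∧
          (∀ a x y, ptrace2 (ext a x y) = instrApply (V y) (ρ a x)) ∧
          (∀ (x x' : X) (y : Fin m), ∑ a, ext a x y = ∑ a, ext a x' y) ∧
          w = CMI (cqStateS pXY ext) } }

/-!
Taking the identity instrument with one outcome and `p(x|y) = p(x)` turns every value in the
supremum defining `SR` into one in the supremum defining `IS`, so the real content is that the
latter set is bounded above (otherwise `sSup` would be `0`). The trivial extension `dE = 1` bounds
each infimum by `I(XĀ;B'|Y) ≤ log₂ |X × Ā|`: the state is block diagonal, so this reduces to the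
classical bound `∑ φ(tₖ) ≤ φ(∑ tₖ) + (∑ tₖ) log₂ |K|` and to the subadditivity
`H(∑ₖ Aₖ) ≤ ∑ₖ H(Aₖ)` of the unnormalized entropy. For the latter, stack the `√Aₖ` into `R`:
`Rᴴ R = ∑ₖ Aₖ` has the nonzero spectrum of `R Rᴴ`, whose diagonal blocks are the `Aₖ`, and pinching
to the diagonal blocks does not decrease entropy (Schur concavity, through the doubly stochastic
matrix `|Uᵢⱼ|²` of a unitary `U`).
-/

section EntPhi

lemma entPhi_zero : entPhi 0 = 0 := by simp [entPhi]

lemma entPhi_mul (a b : ℝ) : entPhi (a * b) = a * entPhi b + b * entPhi a := by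
  have h t : entPhi t = Real.negMulLog t / Real.log 2 := by
    simp only [entPhi, Real.negMulLog, Real.logb]
    ring
  simp only [h, Real.negMulLog_mul]
  ring

lemma concaveOn_entPhi : ConcaveOn ℝ (Set.Ici 0) entPhi := by
  have h : entPhi = fun t => (Real.log 2)⁻¹ • Real.negMulLog t := by
    funext t
    simp only [entPhi, Real.negMulLog, Real.logb, smul_eq_mul]
    ring
  rw [h]
  exact Real.concaveOn_negMulLog.smul (by positivity)

lemma sum_entPhi_le {K : Type*} [Fintype K] (u : K → ℝ) (hu : ∀ k, 0 ≤ u k) :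
    ∑ k, entPhi (u k) ≤ entPhi (∑ k, u k) + (∑ k, u k) * Real.logb 2 (Fintype.card K) := by
  rcases isEmpty_or_nonempty K with hK | hK
  · simp [entPhi_zero]
  set c : ℝ := (Fintype.card K : ℝ)
  have hc : 0 < c := Nat.cast_pos.mpr Fintype.card_pos
  have hJensen := concaveOn_entPhi.le_map_sum (t := Finset.univ) (w := fun _ => c⁻¹) (p := u)
    (fun _ _ => by positivity) (by simp [c, hc.ne']) (fun k _ => hu k)
  have hinv : entPhi c⁻¹ = c⁻¹ * Real.logb 2 c := by simp [entPhi, Real.logb_inv]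
  rw [← Finset.smul_sum, ← Finset.smul_sum, smul_eq_mul, smul_eq_mul, mul_comm c⁻¹, entPhi_mul,
    hinv] at hJensen
  have := mul_le_mul_of_nonneg_left hJensen hc.le
  field_simp at this
  linarith

end EntPhi

section RootEntropy

open Polynomial

def rootEntropy (p : ℂ[X]) : ℝ :=
  (p.roots.map fun z => entPhi z.re).sum

lemma rootEntropy_mul {p q : ℂ[X]} (hpq : p * q ≠ 0) :
    rootEntropy (p * q) = rootEntropy p + rootEntropy q := by
  simp [rootEntropy, roots_mul hpq]

lemma rootEntropy_X_pow (k : ℕ) : rootEntropy (X ^ k) = 0 := by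
  simp [rootEntropy, Multiset.map_nsmul, entPhi_zero, Multiset.sum_nsmul]

lemma rootEntropy_X_sub_C (a : ℂ) : rootEntropy (X - C a) = entPhi a.re := by
  simp [rootEntropy]

lemma rootEntropy_prod {ι : Type*} (s : Finset ι) (f : ι → ℂ[X]) (hf : ∀ i ∈ s, (f i).Monic) :
    rootEntropy (∏ i ∈ s, f i) = ∑ i ∈ s, rootEntropy (f i) := by
  classical
  induction s using Finset.induction_on with
  | empty => simp [rootEntropy]
  | insert i s hi ih =>
    have hmonic : (∏ j ∈ s, f j).Monic := monic_prod_of_monic _ _ fun j hj => hf j (by simp [hj])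
    rw [Finset.prod_insert hi, Finset.sum_insert hi,
      rootEntropy_mul ((hf i (by simp)).mul hmonic).ne_zero,
      ih fun j hj => hf j (by simp [hj])]

end RootEntropy

section VonNeumannEntropy

open Polynomial

variable {n : Type*} [Fintype n] [DecidableEq n]

lemma vnEntropy_eq_rootEntropy_charpoly {A : Matrix n n ℂ} (hA : A.IsHermitian) :
    vnEntropy A = rootEntropy A.charpoly := by
  simp [vnEntropy, hA, rootEntropy, hA.roots_charpoly_eq_eigenvalues]

lemma vnEntropy_submatrix {m : Type*} [Fintype m] [DecidableEq m] (e : m ≃ n)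
    (A : Matrix n n ℂ) : vnEntropy (A.submatrix e e) = vnEntropy A := by
  by_cases hA : A.IsHermitian
  · rw [vnEntropy_eq_rootEntropy_charpoly hA, vnEntropy_eq_rootEntropy_charpoly (hA.submatrix e)]
    exact congrArg rootEntropy (Matrix.charpoly_reindex e.symm A)
  · have hA' : ¬ (A.submatrix e e).IsHermitian := fun h => hA <| by
      simpa using h.submatrix e.symm
    simp [vnEntropy, hA, hA']

lemma vnEntropy_diagonal_ofReal (d : n → ℝ) :
    vnEntropy (Matrix.diagonal fun i => (d i : ℂ)) = ∑ i, entPhi (d i) := by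
  have hd : (Matrix.diagonal fun i => (d i : ℂ)).IsHermitian := by
    simp [Matrix.IsHermitian, Matrix.diagonal_conjTranspose, Pi.star_def]
  rw [vnEntropy_eq_rootEntropy_charpoly hd, Matrix.charpoly_diagonal,
    rootEntropy_prod _ _ fun i _ => monic_X_sub_C _]
  simp [rootEntropy_X_sub_C]

lemma charpoly_blockDiagonal {o : Type*} [Fintype o] [DecidableEq o] {R : Type*} [CommRing R]
    (M : o → Matrix n n R) :
    (Matrix.blockDiagonal M).charpoly = ∏ k, (M k).charpoly := by
  have : (Matrix.blockDiagonal M).charmatrix = Matrix.blockDiagonal fun k => (M k).charmatrix := by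
    ext ⟨i, k⟩ ⟨j, k'⟩
    simp only [Matrix.charmatrix_apply, Matrix.blockDiagonal_apply, Matrix.diagonal_apply,
      Prod.mk.injEq]
    split_ifs <;> simp_all
  rw [Matrix.charpoly, this, Matrix.det_blockDiagonal]
  rfl

lemma vnEntropy_blockDiagonal {o : Type*} [Fintype o] [DecidableEq o]
    (M : o → Matrix n n ℂ) (hM : ∀ k, (M k).IsHermitian) :
    vnEntropy (Matrix.blockDiagonal M) = ∑ k, vnEntropy (M k) := by
  have hH : (Matrix.blockDiagonal M).IsHermitian := Matrix.isHermitian_blockDiagonal_iff.mpr hM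
  rw [vnEntropy_eq_rootEntropy_charpoly hH, charpoly_blockDiagonal,
    rootEntropy_prod _ _ fun k _ => Matrix.charpoly_monic _]
  simp [vnEntropy_eq_rootEntropy_charpoly (hM _)]

/-- The nonzero spectra of `Bᴴ B` and `B Bᴴ` agree, and zero eigenvalues carry no entropy. -/
lemma vnEntropy_conjTranspose_mul_self {m : Type*} [Fintype m] [DecidableEq m]
    (B : Matrix m n ℂ) : vnEntropy (Bᴴ * B) = vnEntropy (B * Bᴴ) := by
  have h := congrArg rootEntropy (Matrix.charpoly_mul_comm' Bᴴ B)
  rw [rootEntropy_mul ((monic_X_pow _).mul (Matrix.charpoly_monic _)).ne_zero,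
    rootEntropy_mul ((monic_X_pow _).mul (Matrix.charpoly_monic _)).ne_zero,
    rootEntropy_X_pow, rootEntropy_X_pow, zero_add, zero_add] at h
  rw [vnEntropy_eq_rootEntropy_charpoly (Matrix.isHermitian_conjTranspose_mul_self B),
    vnEntropy_eq_rootEntropy_charpoly (Matrix.isHermitian_mul_conjTranspose_self B), h]

end VonNeumannEntropy

section Pinching

open Matrix

variable {n : Type*} [Fintype n] [DecidableEq n]

lemma ConcaveOn.sum_le_sum_mulVec {s : Set ℝ} {f : ℝ → ℝ} (hf : ConcaveOn ℝ s f)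
    {M : Matrix n n ℝ} (hM : M ∈ doublyStochastic ℝ n) {x : n → ℝ} (hx : ∀ i, x i ∈ s) :
    ∑ i, f (x i) ≤ ∑ j, f ((M *ᵥ x) j) := by
  calc ∑ i, f (x i) = ∑ i, (∑ j, M j i) * f (x i) := by
        simp [sum_col_of_mem_doublyStochastic hM]
    _ = ∑ j, ∑ i, M j i • f (x i) := by
        simp only [Finset.sum_mul, smul_eq_mul]
        exact Finset.sum_comm
    _ ≤ ∑ j, f ((M *ᵥ x) j) := Finset.sum_le_sum fun j _ =>
        hf.le_map_sum (fun i _ => nonneg_of_mem_doublyStochastic hM)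
          (sum_row_of_mem_doublyStochastic hM j) (fun i _ => hx i)

lemma normSq_mem_doublyStochastic (U : unitaryGroup n ℂ) :
    (of fun i j => Complex.normSq ((U : Matrix n n ℂ) i j)) ∈ doublyStochastic ℝ n := by
  have hrow (V : unitaryGroup n ℂ) i : ∑ j, Complex.normSq ((V : Matrix n n ℂ) i j) = 1 := by
    have := congrFun (congrFun (mem_unitaryGroup_iff.mp V.2) i) i
    simp only [mul_apply, star_apply, RCLike.star_def, Complex.mul_conj, one_apply_eq] at this
    exact_mod_cast this
  refine mem_doublyStochastic_iff_sum.mpr ⟨fun i j => Complex.normSq_nonneg _, hrow U, fun j => ?_⟩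
  simpa using hrow (star U) j

lemma mul_diagonal_mul_star_apply_self (G : Matrix n n ℂ) (d : n → ℝ) (j : n) :
    (G * diagonal (fun i => (d i : ℂ)) * star G) j j
      = ((of fun i j => Complex.normSq (G i j)) *ᵥ d) j := by
  simp only [mul_apply, diagonal_apply, mul_ite, mul_zero, Finset.sum_ite_eq', Finset.mem_univ,
    if_true, star_apply, RCLike.star_def, mulVec, dotProduct, of_apply, Complex.ofReal_sum,
    Complex.ofReal_mul]
  refine Finset.sum_congr rfl fun i _ => ?_
  rw [mul_right_comm, Complex.mul_conj]

lemma vnEntropy_le_sum_entPhi_diag {Ω : Matrix n n ℂ} (hΩ : Ω.PosSemidef)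
    (U : unitaryGroup n ℂ) :
    vnEntropy Ω ≤ ∑ j, entPhi ((star (U : Matrix n n ℂ) * Ω * U) j j).re := by
  let G : unitaryGroup n ℂ := star U * hΩ.1.eigenvectorUnitary
  have hdiag : star (U : Matrix n n ℂ) * Ω * U
      = G * diagonal (fun i => (hΩ.1.eigenvalues i : ℂ)) * star (G : Matrix n n ℂ) := by
    conv_lhs => rw [hΩ.1.spectral_theorem]
    simp [G, Unitary.conjStarAlgAut_apply, Matrix.mul_assoc, Function.comp_def]
  rw [vnEntropy, dif_pos hΩ.1, hdiag]
  simp only [mul_diagonal_mul_star_apply_self, Complex.ofReal_re]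
  exact concaveOn_entPhi.sum_le_sum_mulVec (normSq_mem_doublyStochastic G)
    fun i => hΩ.eigenvalues_nonneg i

end Pinching

section Subadditivity

open Matrix

variable {n : Type*} [Fintype n] [DecidableEq n] {o : Type*} [Fintype o] [DecidableEq o]

lemma blockDiagonal_mem_unitaryGroup (U : o → unitaryGroup n ℂ) :
    blockDiagonal (fun k => (U k : Matrix n n ℂ)) ∈ unitaryGroup (n × o) ℂ := by
  rw [mem_unitaryGroup_iff, star_eq_conjTranspose, blockDiagonal_conjTranspose,
    ← blockDiagonal_mul]
  simp [← star_eq_conjTranspose, ← Pi.one_def]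

lemma vnEntropy_le_sum_vnEntropy_blockDiag {Ω : Matrix (n × o) (n × o) ℂ} (hΩ : Ω.PosSemidef) :
    vnEntropy Ω ≤ ∑ k, vnEntropy (Ω.blockDiag k) := by
  have hH k : (Ω.blockDiag k).IsHermitian := by
    simpa [IsHermitian, blockDiag_conjTranspose] using congrArg (blockDiag · k) hΩ.1.eq
  let W : unitaryGroup (n × o) ℂ :=
    ⟨_, blockDiagonal_mem_unitaryGroup fun k => (hH k).eigenvectorUnitary⟩
  have hW i k : (star (W : Matrix (n × o) (n × o) ℂ) * Ω * W) (i, k) (i, k)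
      = ((hH k).eigenvalues i : ℂ) := by
    have := congrFun (congrFun ((hH k).conjStarAlgAut_star_eigenvectorUnitary) i) i
    simp only [Unitary.conjStarAlgAut_star_apply, diagonal_apply_eq, Function.comp_apply] at this
    refine Eq.trans ?_ this
    simp [W, mul_apply, blockDiagonal_apply, blockDiag_apply, Fintype.sum_prod_type,
      star_eq_conjTranspose]
  calc vnEntropy Ω ≤ ∑ p : n × o, entPhi ((star (W : Matrix (n × o) (n × o) ℂ) * Ω * W) p p).re :=
        vnEntropy_le_sum_entPhi_diag hΩ W
    _ = ∑ k, vnEntropy (Ω.blockDiag k) := by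
        rw [Fintype.sum_prod_type, Finset.sum_comm]
        simp [hW, vnEntropy, hH]

lemma vnEntropy_sum_conjTranspose_mul_self_le {m : Type*} [Fintype m] [DecidableEq m]
    (B : o → Matrix m n ℂ) :
    vnEntropy (∑ k, (B k)ᴴ * B k) ≤ ∑ k, vnEntropy ((B k)ᴴ * B k) := by
  let R : Matrix (m × o) n ℂ := of fun p j => B p.2 p.1 j
  have hRR : Rᴴ * R = ∑ k, (B k)ᴴ * B k := by
    ext i j
    simp [R, mul_apply, Fintype.sum_prod_type, Matrix.sum_apply, Finset.sum_comm (γ := m)]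
  have hblock k : (R * Rᴴ).blockDiag k = B k * (B k)ᴴ := by
    ext i j
    simp [R, mul_apply, blockDiag_apply]
  calc vnEntropy (∑ k, (B k)ᴴ * B k) = vnEntropy (R * Rᴴ) := by
        rw [← hRR, vnEntropy_conjTranspose_mul_self]
    _ ≤ ∑ k, vnEntropy ((R * Rᴴ).blockDiag k) :=
        vnEntropy_le_sum_vnEntropy_blockDiag (posSemidef_self_mul_conjTranspose R)
    _ = ∑ k, vnEntropy ((B k)ᴴ * B k) := by
        simp [hblock, vnEntropy_conjTranspose_mul_self]

open scoped MatrixOrder in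
lemma vnEntropy_sum_le {A : o → Matrix n n ℂ} (hA : ∀ k, (A k).PosSemidef) :
    vnEntropy (∑ k, A k) ≤ ∑ k, vnEntropy (A k) := by
  have hsqrt k : (CFC.sqrt (A k))ᴴ * CFC.sqrt (A k) = A k := by
    rw [(CFC.sqrt_nonneg (A k)).posSemidef.isHermitian.eq,
      CFC.sqrt_mul_sqrt_self (A k) (hA k).nonneg]
  simpa only [hsqrt] using vnEntropy_sum_conjTranspose_mul_self_le fun k => CFC.sqrt (A k)

end Subadditivity

section ConditionalMutualInformation

open Matrix

variable {K L M : Type*}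

lemma CMI_submatrix [Fintype K] [Fintype L] [Fintype M]
    [DecidableEq K] [DecidableEq L] [DecidableEq M] {K' L' M' : Type*}
    [Fintype K'] [Fintype L'] [Fintype M'] [DecidableEq K'] [DecidableEq L'] [DecidableEq M']
    (eK : K' ≃ K) (eL : L' ≃ L) (eM : M' ≃ M) (σ : Matrix (K × L × M) (K × L × M) ℂ) :
    CMI (σ.submatrix (eK.prodCongr (eL.prodCongr eM)) (eK.prodCongr (eL.prodCongr eM)))
      = CMI σ := by
  have hKM : margKM (σ.submatrix (eK.prodCongr (eL.prodCongr eM))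
      (eK.prodCongr (eL.prodCongr eM)))
      = (margKM σ).submatrix (eK.prodCongr eM) (eK.prodCongr eM) := by
    ext p q
    exact Equiv.sum_comp eL fun l => σ (eK p.1, l, eM p.2) (eK q.1, l, eM q.2)
  have hLM : margLM (σ.submatrix (eK.prodCongr (eL.prodCongr eM))
      (eK.prodCongr (eL.prodCongr eM)))
      = (margLM σ).submatrix (eL.prodCongr eM) (eL.prodCongr eM) := by
    ext p q
    exact Equiv.sum_comp eK fun k => σ (k, eL p.1, eM p.2) (k, eL q.1, eM q.2)
  have hM : margM (σ.submatrix (eK.prodCongr (eL.prodCongr eM))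
      (eK.prodCongr (eL.prodCongr eM))) = (margM σ).submatrix eM eM := by
    ext p q
    simp only [margM, of_apply, submatrix_apply, Equiv.prodCongr_apply, Prod.map]
    rw [← Equiv.sum_comp eK]
    exact Finset.sum_congr rfl fun k _ =>
      Equiv.sum_comp eL fun l => σ (eK k, l, eM p) (eK k, l, eM q)
  simp only [CMI, hKM, hLM, hM, vnEntropy_submatrix]

variable [DecidableEq K] [DecidableEq M]

/-- The state `∑_{k,m} |k⟩⟨k| ⊗ A k m ⊗ |m⟩⟨m|`, classical on its first and last factors. -/
def cqBlockState (A : K → M → Matrix L L ℂ) : Matrix (K × L × M) (K × L × M) ℂ :=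
  of fun p q => if p.1 = q.1 ∧ p.2.2 = q.2.2 then A p.1 p.2.2 p.2.1 q.2.1 else 0

variable (A : K → M → Matrix L L ℂ)

lemma margKM_cqBlockState [Fintype L] :
    margKM (cqBlockState A) = diagonal fun km => (A km.1 km.2).trace := by
  ext ⟨k, m⟩ ⟨k', m'⟩
  simp [margKM, cqBlockState, diagonal_apply, trace]

lemma margLM_cqBlockState [Fintype K] :
    margLM (cqBlockState A) = blockDiagonal fun m => ∑ k, A k m := by
  ext ⟨l, m⟩ ⟨l', m'⟩
  simp [margLM, cqBlockState, blockDiagonal_apply, Matrix.sum_apply]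

lemma margM_cqBlockState [Fintype K] [Fintype L] :
    margM (cqBlockState A) = diagonal fun m => ∑ k, (A k m).trace := by
  ext m m'
  simp [margM, cqBlockState, diagonal_apply, trace]

lemma vnEntropy_cqBlockState [Fintype K] [Fintype L] [Fintype M] [DecidableEq L]
    (hA : ∀ k m, (A k m).IsHermitian) :
    vnEntropy (cqBlockState A) = ∑ k, ∑ m, vnEntropy (A k m) := by
  let e : K × L × M ≃ L × K × M :=
    (Equiv.prodAssoc K L M).symm.trans
      (((Equiv.prodComm K L).prodCongr (Equiv.refl M)).trans (Equiv.prodAssoc L K M))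
  have : cqBlockState A = (blockDiagonal fun km : K × M => A km.1 km.2).submatrix e e := by
    ext ⟨k, l, m⟩ ⟨k', l', m'⟩
    simp [e, cqBlockState, blockDiagonal_apply]
  rw [this, vnEntropy_submatrix,
    vnEntropy_blockDiagonal (fun km : K × M => A km.1 km.2) fun km => hA km.1 km.2,
    Fintype.sum_prod_type]

lemma Matrix.PosSemidef.ofReal_re_trace {n : Type*} [Fintype n] {P : Matrix n n ℂ}
    (hP : P.PosSemidef) : ((P.trace.re : ℝ) : ℂ) = P.trace :=
  (Complex.eq_re_of_ofReal_le (by rw [Complex.ofReal_zero]; exact hP.trace_nonneg)).symm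

lemma CMI_cqBlockState_le [Fintype K] [Fintype L] [Fintype M] [DecidableEq L]
    (hA : ∀ k m, (A k m).PosSemidef) :
    CMI (cqBlockState A) ≤ (∑ k, ∑ m, (A k m).trace.re) * Real.logb 2 (Fintype.card K) := by
  set t : K → M → ℝ := fun k m => (A k m).trace.re
  have htr k m : (A k m).trace = (t k m : ℂ) := ((hA k m).ofReal_re_trace).symm
  have hKM : vnEntropy (margKM (cqBlockState A)) = ∑ m, ∑ k, entPhi (t k m) := by
    simp only [margKM_cqBlockState, htr, vnEntropy_diagonal_ofReal]
    rw [Fintype.sum_prod_type, Finset.sum_comm]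
  have hLM : vnEntropy (margLM (cqBlockState A)) ≤ ∑ m, ∑ k, vnEntropy (A k m) := by
    rw [margLM_cqBlockState, vnEntropy_blockDiagonal _ fun m =>
      (posSemidef_sum Finset.univ fun k _ => hA k m).isHermitian]
    exact Finset.sum_le_sum fun m _ => vnEntropy_sum_le fun k => hA k m
  have hKLM : vnEntropy (cqBlockState A) = ∑ m, ∑ k, vnEntropy (A k m) := by
    rw [vnEntropy_cqBlockState A fun k m => (hA k m).isHermitian, Finset.sum_comm]
  have hM : vnEntropy (margM (cqBlockState A)) = ∑ m, entPhi (∑ k, t k m) := by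
    simp only [margM_cqBlockState, htr, ← Complex.ofReal_sum, vnEntropy_diagonal_ofReal]
  have hShannon := Finset.sum_le_sum fun m (_ : m ∈ Finset.univ) => sum_entPhi_le (t · m)
    fun k => Complex.zero_le_real.mp (htr k m ▸ (hA k m).trace_nonneg)
  rw [Finset.sum_add_distrib] at hShannon
  rw [CMI, hKM, hKLM, hM, Finset.sum_comm (f := t), Finset.sum_mul]
  linarith

end ConditionalMutualInformation

lemma Real.sInf_le_of_mem_of_le {S : Set ℝ} {w C : ℝ} (hw : w ∈ S) (hwC : w ≤ C) (hC : 0 ≤ C) :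
    sInf S ≤ C := by
  by_cases hS : BddBelow S
  · exact (csInf_le hS hw).trans hwC
  · rwa [Real.sInf_of_not_bddBelow hS]

section Instrument

open Matrix

variable {B : Type*} [Fintype B] {d nk : ℕ}

lemma instrApply_posSemidef [DecidableEq B] (V : Fin nk → Matrix (Fin d) B ℂ)
    {σ : Matrix B B ℂ} (hσ : σ.PosSemidef) : (instrApply V σ).PosSemidef :=
  posSemidef_sum _ fun u _ => hσ.mul_mul_conjTranspose_same (V u)

lemma instrApply_sum {ι : Type*} [Fintype ι] (V : Fin nk → Matrix (Fin d) B ℂ)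
    (σ : ι → Matrix B B ℂ) : instrApply V (∑ i, σ i) = ∑ i, instrApply V (σ i) := by
  simp only [instrApply, Matrix.mul_sum, Matrix.sum_mul]
  exact Finset.sum_comm

lemma sum_trace_instrApply [DecidableEq B] {m : ℕ} (V : Fin m → Fin nk → Matrix (Fin d) B ℂ)
    (hV : ∑ y, ∑ u, (V y u)ᴴ * V y u = 1) (σ : Matrix B B ℂ) :
    ∑ y, (instrApply (V y) σ).trace = σ.trace := by
  have h y : (instrApply (V y) σ).trace = ((∑ u, (V y u)ᴴ * V y u) * σ).trace := by
    simp only [instrApply, trace_sum, Matrix.sum_mul]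
    exact Finset.sum_congr rfl fun u _ => by rw [trace_mul_cycle, Matrix.mul_assoc]
  simp only [h, ← trace_sum, ← Matrix.sum_mul, hV, Matrix.one_mul]

end Instrument

lemma exists_isProbDist (X : Type*) [Fintype X] [Nonempty X] : ∃ p : X → ℝ, IsProbDist p :=
  ⟨fun _ => (Fintype.card X : ℝ)⁻¹, fun _ => by positivity, by simp⟩

section Steerability

open Matrix

variable {A X B : Type*}

/-- The set whose infimum `SR` takes for the input distribution `p`. -/
def restrictedExtensionCMIs [Fintype A] [Fintype X] [Fintype B] [DecidableEq A] [DecidableEq X]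
    [DecidableEq B] (ρ : A → X → Matrix B B ℂ) (p : X → ℝ) : Set ℝ :=
  { w : ℝ | ∃ dE : ℕ, 1 ≤ dE ∧
      ∃ ext : A → X → Matrix (B × Fin dE) (B × Fin dE) ℂ,
        IsNSExt ρ ext ∧ w = CMI (cqStateR p ext) }

/-- The set whose infimum `IS` takes for the 1W-LOCC operation `(V, pXY)`. -/
def extensionCMIs [Fintype A] [Fintype X] [Fintype B] [DecidableEq A] [DecidableEq X]
    (ρ : A → X → Matrix B B ℂ) {m dB' nk : ℕ} (V : Fin m → Fin nk → Matrix (Fin dB') B ℂ)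
    (pXY : X → Fin m → ℝ) : Set ℝ :=
  { w : ℝ | ∃ dE : ℕ, 1 ≤ dE ∧
      ∃ ext : A → X → Fin m → Matrix (Fin dB' × Fin dE) (Fin dB' × Fin dE) ℂ,
        (∀ a x y, (ext a x y).PosSemidef) ∧
        (∀ a x y, ptrace2 (ext a x y) = instrApply (V y) (ρ a x)) ∧
        (∀ (x x' : X) (y : Fin m), ∑ a, ext a x y = ∑ a, ext a x' y) ∧
        w = CMI (cqStateS pXY ext) }

lemma extensionCMIs_one [Fintype A] [Fintype X] [DecidableEq A] [DecidableEq X] {d : ℕ}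
    (ρ : A → X → Matrix (Fin d) (Fin d) ℂ) (p : X → ℝ) :
    extensionCMIs ρ (fun _ _ => 1 : Fin 1 → Fin 1 → Matrix (Fin d) (Fin d) ℂ) (fun x _ => p x)
      = restrictedExtensionCMIs ρ p := by
  have hCMI {dE : ℕ} (ext : A → X → Matrix (Fin d × Fin dE) (Fin d × Fin dE) ℂ) :
      CMI (cqStateS (fun x (_ : Fin 1) => p x) fun a x _ => ext a x) = CMI (cqStateR p ext) := by
    rw [← CMI_submatrix (Equiv.refl _) (Equiv.refl _) (Equiv.prodUnique (Fin dE) (Fin 1))]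
    congr 1
    ext ⟨k, l, e, u⟩ ⟨k', l', e', u'⟩
    simp [cqStateS, cqStateR, Subsingleton.elim u u']
  have hK (σ : Matrix (Fin d) (Fin d) ℂ) :
      instrApply (fun _ => 1 : Fin 1 → Matrix (Fin d) (Fin d) ℂ) σ = σ := by
    simp [instrApply]
  ext w
  constructor
  · rintro ⟨dE, hdE, ext, hpsd, htr, hns, rfl⟩
    have hext : ext = fun a x _ => ext a x 0 := by
      funext a x y
      rw [Subsingleton.elim y 0]
    refine ⟨dE, hdE, fun a x => ext a x 0,
      ⟨fun a x => hpsd a x 0, fun a x => (htr a x 0).trans (hK _), fun x x' => hns x x' 0⟩, ?_⟩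
    rw [hext, hCMI]
  · rintro ⟨dE, hdE, ext, ⟨hpsd, htr, hns⟩, rfl⟩
    exact ⟨dE, hdE, fun a x _ => ext a x, fun a x _ => hpsd a x,
      fun a x _ => (htr a x).trans (hK _).symm, fun x x' _ => hns x x', (hCMI ext).symm⟩

variable [Fintype A] [Fintype X] [Fintype B] [DecidableEq B]
  {ρ : A → X → Matrix B B ℂ} {m dB' nk : ℕ} {V : Fin m → Fin nk → Matrix (Fin dB') B ℂ}
  {pXY : X → Fin m → ℝ}

lemma IsAssemblage.sum_trace_instrApply_eq_one [Nonempty X] (hρ : IsAssemblage ρ)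
    (hV : ∑ y, ∑ u, (V y u)ᴴ * V y u = 1) (hp : ∀ y, IsProbDist fun x => pXY x y) :
    ∑ x, ∑ a, ∑ y, (pXY x y : ℂ) * (instrApply (V y) (ρ a x)).trace = 1 := by
  obtain ⟨x₀⟩ := ‹Nonempty X›
  have hp' y : ∑ x, (pXY x y : ℂ) = 1 := by exact_mod_cast (hp y).2
  calc ∑ x, ∑ a, ∑ y, (pXY x y : ℂ) * (instrApply (V y) (ρ a x)).trace
      = ∑ x, ∑ y, ∑ a, (pXY x y : ℂ) * (instrApply (V y) (ρ a x)).trace :=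
        Finset.sum_congr rfl fun _ _ => Finset.sum_comm
    _ = ∑ y, ∑ x, ∑ a, (pXY x y : ℂ) * (instrApply (V y) (ρ a x)).trace := Finset.sum_comm
    _ = ∑ y, ∑ x, (pXY x y : ℂ) * (instrApply (V y) (∑ a, ρ a x)).trace := by
        simp only [instrApply_sum, trace_sum, Finset.mul_sum]
    _ = ∑ y, (instrApply (V y) (∑ a, ρ a x₀)).trace := by
        simp only [hρ.2.2 _ x₀, ← Finset.sum_mul, hp', one_mul]
    _ = 1 := by rw [sum_trace_instrApply V hV, trace_sum, hρ.2.1 x₀]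

variable [DecidableEq A] [DecidableEq X]

lemma sInf_extensionCMIs_le [Nonempty X] (hρ : IsAssemblage ρ)
    (hV : ∑ y, ∑ u, (V y u)ᴴ * V y u = 1) (hp : ∀ y, IsProbDist fun x => pXY x y) :
    sInf (extensionCMIs ρ V pXY) ≤ Real.logb 2 (Fintype.card (X × A)) := by
  let ext : A → X → Fin m → Matrix (Fin dB' × Fin 1) (Fin dB' × Fin 1) ℂ :=
    fun a x y => (instrApply (V y) (ρ a x)).submatrix Prod.fst Prod.fst
  let blocks : X × A → Fin 1 × Fin m → Matrix (Fin dB') (Fin dB') ℂ :=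
    fun k ey => (pXY k.1 ey.2 : ℂ) • instrApply (V ey.2) (ρ k.2 k.1)
  have hstate : cqStateS pXY ext = cqBlockState blocks := by
    ext ⟨k, l, e, y⟩ ⟨k', l', e', y'⟩
    simp [cqStateS, cqBlockState, ext, blocks, Subsingleton.elim e e']
  have hblocks k ey : (blocks k ey).PosSemidef :=
    (instrApply_posSemidef _ (hρ.1 _ _)).smul (Complex.zero_le_real.mpr ((hp _).1 _))
  have htrace : ∑ k, ∑ ey, (blocks k ey).trace.re = 1 := by
    simpa [blocks, Fintype.sum_prod_type, trace_smul, Complex.re_sum] using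
      congrArg Complex.re (hρ.sum_trace_instrApply_eq_one hV hp)
  refine Real.sInf_le_of_mem_of_le ⟨1, le_rfl, ext, fun a x y => ?_, fun a x y => ?_,
    fun x x' y => ?_, rfl⟩ ?_ ?_
  · exact (instrApply_posSemidef _ (hρ.1 a x)).submatrix Prod.fst
  · ext i j
    simp [ptrace2, ext]
  · ext i j
    simpa [ext, Matrix.sum_apply, instrApply_sum] using
      congrFun (congrFun (congrArg (instrApply (V y)) (hρ.2.2 x x')) i.1) j.1
  · simpa [hstate, htrace] using CMI_cqBlockState_le blocks hblocks
  · rw [Real.logb, div_nonneg_iff]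
    exact Or.inl ⟨Real.log_natCast_nonneg _, Real.log_nonneg one_le_two⟩

end Steerability

theorem restricted_le_intrinsic_steerability_general {r s dB : ℕ}
    (hs : 1 ≤ s) (hdB : 1 ≤ dB)
    (ρ : Fin r → Fin s → Matrix (Fin dB) (Fin dB) ℂ)
    (hA : IsAssemblage ρ) :
    SR ρ ≤ IS ρ := by
  have : Nonempty (Fin s) := Fin.pos_iff_nonempty.mp hs
  refine csSup_le_csSup ⟨Real.logb 2 (Fintype.card (Fin s × Fin r)), ?_⟩ ?_ ?_
  · rintro _ ⟨m, dB', nk, V, pXY, -, -, hV, hp, rfl⟩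
    exact sInf_extensionCMIs_le hA hV hp
  · obtain ⟨p, hp⟩ := exists_isProbDist (Fin s)
    exact ⟨_, p, hp, rfl⟩
  · rintro _ ⟨p, hp, rfl⟩
    exact ⟨1, dB, 1, _, fun x _ => p x, le_rfl, hdB, by simp, fun _ => hp,
      (congrArg sInf (extensionCMIs_one ρ p)).symm⟩

/-- Intrinsic steerability is never smaller than restricted intrinsic steerability. -/
theorem restricted_le_intrinsic_steerability {r s dB : ℕ}
    (hr : 1 ≤ r) (hs : 1 ≤ s) (hdB : 1 ≤ dB)
    (ρ : Fin r → Fin s → Matrix (Fin dB) (Fin dB) ℂ)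
    (hA : IsAssemblage ρ) :
    SR ρ ≤ IS ρ :=
  restricted_le_intrinsic_steerability_general hs hdB ρ hA
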